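/- arXiv:2112.11896 — 2 statements merged into one kernel-verified Lean document; each statement's English description precedes it below -/
import Mathlib

section
/- Let q be an odd prime power, let ω be a primitive element of F_{q²}, let α = ω^{q−1} (a primitive (q+1)-st root of unity), and let k be odd with 1 ≤ k ≤ q; write k = q − 2r. Let g_1(X) = ∏_{i=−r}^{r} (X − α^i), a polynomial with coefficients in F_q dividing X^{q+1} − 1. Then the k-dimensional cyclic code ⟨g_1⟩ of length q+1 over F_q is a generalised Reed–Solomon code (and is a [q+1, k, q+2−k]_q MDS code). -/
open Polynomial

/-- A generalised Reed–Solomon code of length `q+1` and dimension `k`, with symbols from the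
field `F` of `q` elements, viewed inside the `F`-algebra `K` via `algebraMap`. -/
def IsGRSCode (q k : ℕ) (F K : Type*) [Field F] [CommRing K] [Algebra F K]
    (Code : Set (Fin (q + 1) → K)) : Prop :=
  ∃ (a : Fin q → F) (θ : Fin (q + 1) → F),
    Function.Bijective a ∧ (∀ i, θ i ≠ 0) ∧
    Code = { w | ∃ f : Polynomial F, f.degree ≤ (k - 1 : ℕ) ∧
      w = fun i => algebraMap F K
        (θ i * (Fin.snoc (fun j : Fin q => f.eval (a j)) (f.coeff (k - 1)) : Fin (q + 1) → F) i) }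

/-!
Write `β = α ^ q` and pick `b ∈ 𝔽_{q²} \ 𝔽_q`. Frobenius acts on the `(q+1)`-st roots of unity as
`z ↦ z⁻¹`, which makes the Möbius map `z ↦ (b z - b^q β) / (z - β)` Frobenius-invariant on them:
it sends `α^0, …, α^{q-1}` bijectively onto `𝔽_q` and `β` to `∞`. Choosing `ν` with
`ν^{q-1} = β`, the multipliers `θ_i = α^{i(r+1)} (ν (α^i - β))^{k-1}` (and the analogous one at
`β`) are Frobenius-invariant because `k - 1` is even, so they lie in `𝔽_q`. With these choices the
`i`-th coordinate of the GRS codeword of `f` is `α^{i(r+1)} G(α^i)`, where `G`, the homogenisation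
of `f` composed with the Möbius map, has degree `< k`. Since `∑_i α^{im} = 0` for `0 < m ≤ q`, the
word polynomial `∑ w_i X^i` vanishes at `α^j` for `|j| ≤ r`, so it is a multiple of `g₁`: the GRS
code lies in the cyclic code. Both have dimension `k`, so they coincide, and the distance bound is
the usual one for GRS codes.
-/

open Finset

theorem exists_algebraMap_eq_of_pow_card_eq {F K : Type*} [Field F] [Fintype F] [Field K]
    [Algebra F K] {x : K} (hx : x ^ Fintype.card F = x) : ∃ y : F, algebraMap F K y = x := by
  have hcard : 1 < Fintype.card F := Fintype.one_lt_card
  have hsplit : (X ^ Fintype.card F - X : F[X]).Splits := by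
    rw [splits_iff_card_roots, FiniteField.roots_X_pow_card_sub_X,
      FiniteField.X_pow_card_sub_X_natDegree_eq F hcard]
    rfl
  exact hsplit.mem_range_of_isRoot (FiniteField.X_pow_card_sub_X_ne_zero F hcard)
    (by simp [hx] : ((X ^ _ - X : F[X]).map (algebraMap F K)).IsRoot x)

theorem exists_pow_card_ne {F K : Type*} [Field F] [Fintype F] [Field K] [Fintype K]
    [Algebra F K] (h : Fintype.card F < Fintype.card K) : ∃ b : K, b ^ Fintype.card F ≠ b := by
  by_contra! hfix
  have hsurj : Function.Surjective (algebraMap F K) :=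
    fun x ↦ exists_algebraMap_eq_of_pow_card_eq (hfix x)
  exact (Fintype.card_le_of_surjective _ hsurj).not_gt h

theorem pow_mul_pow_pow_eq_self {K : Type*} [Field K] {q r m : ℕ} (hq : q + 1 = 2 * r + m)
    (hm : Even m) {z W : K} (hz : z ^ q * z = 1) (hW : W ^ q * z = -W) :
    (z ^ r * W ^ m) ^ q = z ^ r * W ^ m := by
  have hz0 : z ≠ 0 := right_ne_zero_of_mul_eq_one hz
  refine mul_right_cancel₀ (pow_ne_zero (r + m) hz0) ?_
  calc (z ^ r * W ^ m) ^ q * z ^ (r + m) = (z ^ q * z) ^ r * (W ^ q * z) ^ m := by ring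
    _ = (z ^ q * z) * W ^ m := by rw [hz, hW, one_pow, one_mul, one_mul, hm.neg_pow]
    _ = z ^ r * W ^ m * z ^ (r + m) := by rw [← pow_succ, hq]; ring

section Frobenius

variable {F K : Type*} [Field F] [Fintype F] [Field K] [Algebra F K] {q : ℕ}

theorem pow_card_mul_sub_mul (hF : Fintype.card F = q) {u v z β : K} (hu : u ^ q = v)
    (hv : v ^ q = u) (hz : z ^ q * z = 1) (hβ : β ^ q * β = 1) :
    (u * z - v * β) ^ q * (z * β) = -(u * z - v * β) := by
  have hfrob : (u * z - v * β) ^ q = u ^ q * z ^ q - v ^ q * β ^ q := by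
    subst hF
    rw [← mul_pow, ← mul_pow]
    exact map_sub (FiniteField.frobeniusAlgHom F K) _ _
  rw [hfrob, hu, hv]
  linear_combination (v * β) * hz - (u * z) * hβ

theorem exists_algebraMap_eq_pow_mul_pow {ι : Type*} {r m : ℕ} (hF : Fintype.card F = q)
    (hq : q + 1 = 2 * r + m) (hm : Even m) {z W : ι → K} (hz : ∀ i, z i ^ q * z i = 1)
    (hW : ∀ i, W i ^ q * z i = -W i) (hW0 : ∀ i, W i ≠ 0) :
    ∃ θ : ι → F, (∀ i, θ i ≠ 0) ∧ ∀ i, algebraMap F K (θ i) = z i ^ r * W i ^ m := by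
  choose θ hθ using fun i ↦ exists_algebraMap_eq_of_pow_card_eq
    (hF ▸ pow_mul_pow_pow_eq_self hq hm (hz i) (hW i))
  refine ⟨θ, fun i h ↦ ?_, hθ⟩
  have hθi := hθ i
  rw [h, map_zero, eq_comm] at hθi
  exact mul_ne_zero (pow_ne_zero _ (right_ne_zero_of_mul_eq_one (hz i)))
    (pow_ne_zero _ (hW0 i)) hθi

theorem exists_bijective_algebraMap_mul_sub (hF : Fintype.card F = q) {b β : K}
    {z : Fin q → K} (hb : b ^ q ≠ b) (hbb : (b ^ q) ^ q = b) (hβ : β ^ q * β = 1)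
    (hz : ∀ j, z j ^ q * z j = 1) (hzinj : Function.Injective z) (hzβ : ∀ j, z j ≠ β) :
    ∃ a : Fin q → F, Function.Bijective a ∧
      ∀ j, b * z j - b ^ q * β = algebraMap F K (a j) * (z j - β) := by
  have hY (j : Fin q) : z j - β ≠ 0 := sub_ne_zero.2 (hzβ j)
  set t : Fin q → K := fun j ↦ (b * z j - b ^ q * β) / (z j - β) with ht
  have hfix (j : Fin q) : t j ^ Fintype.card F = t j := by
    have hX := pow_card_mul_sub_mul hF rfl hbb (hz j) hβ
    have hY' := pow_card_mul_sub_mul hF (one_pow _) (one_pow _) (hz j) hβ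
    have hzβ0 : z j * β ≠ 0 :=
      mul_ne_zero (right_ne_zero_of_mul_eq_one (hz j)) (right_ne_zero_of_mul_eq_one hβ)
    simp only [one_mul] at hY'
    rw [hF, ht, div_pow, ← mul_div_mul_right _ _ hzβ0, hX, hY', neg_div_neg_eq]
  choose a ha using fun j ↦ exists_algebraMap_eq_of_pow_card_eq (hfix j)
  have hainj : Function.Injective a := by
    intro j j' h
    have h' := congrArg (algebraMap F K) h
    rw [ha, ha, ht, div_eq_div_iff (hY j) (hY j')] at h'
    have hbβ : β * (b ^ q - b) ≠ 0 :=
      mul_ne_zero (right_ne_zero_of_mul_eq_one hβ) (sub_ne_zero.2 hb)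
    refine hzinj (sub_eq_zero.1 ((mul_eq_zero.1 ?_).resolve_left hbβ))
    linear_combination h'
  refine ⟨a, (Fintype.bijective_iff_injective_and_card a).2 ⟨hainj, by simp [hF]⟩, fun j ↦ ?_⟩
  rw [ha, ht, div_mul_cancel₀ _ (hY j)]

end Frobenius

theorem Polynomial.natDegree_lt_of_mem_degreeLT {R : Type*} [Semiring R] {k : ℕ} (hk : 0 < k)
    {f : R[X]} (hf : f ∈ degreeLT R k) : f.natDegree < k := by
  rcases eq_or_ne f 0 with rfl | hf0
  · simpa
  · exact (natDegree_lt_iff_degree_lt hf0).2 (mem_degreeLT.1 hf)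

theorem Polynomial.exists_map_eq_of_coeff_eq {R S : Type*} [CommRing R] [CommRing S]
    {φ : R →+* S} (hφ : Function.Injective φ) {g : S[X]} {c : ℕ → R}
    (hc : ∀ j, φ (c j) = g.coeff j) : ∃ g₀ : R[X], g₀.map φ = g ∧ g₀.coeff = c := by
  obtain ⟨g₀, hg₀⟩ := (mem_lifts g).1 ((lifts_iff_coeff_lifts g).2 fun j ↦ ⟨c j, hc j⟩)
  refine ⟨g₀, hg₀, _root_.funext fun j ↦ hφ ?_⟩
  rw [hc, ← hg₀, coeff_map]

section HomEval

variable {R S : Type*} [CommRing R] [CommRing S] [Algebra R S]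

/-- `f` homogenised to degree `k - 1` and evaluated at `(x, y)` (compare
`Polynomial.homogenize`). -/
noncomputable def homEval (k : ℕ) (f : R[X]) (x y : S) : S :=
  ∑ s ∈ range k, algebraMap R S (f.coeff s) * x ^ s * y ^ (k - 1 - s)

theorem homEval_algebraMap_mul {k : ℕ} {f : R[X]} (hf : f.natDegree < k) (a : R) (y : S) :
    homEval k f (algebraMap R S a * y) y = algebraMap R S (f.eval a) * y ^ (k - 1) := by
  rw [homEval, eval_eq_sum_range' hf, map_sum, sum_mul]
  refine sum_congr rfl fun s hs ↦ ?_
  have hy : y ^ (k - 1) = y ^ s * y ^ (k - 1 - s) := by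
    rw [← pow_add]
    have := mem_range.1 hs
    congr 1
    omega
  rw [map_mul, map_pow, mul_pow, hy]
  ring

theorem homEval_zero_right {k : ℕ} (hk : 1 ≤ k) (f : R[X]) (x : S) :
    homEval k f x 0 = algebraMap R S (f.coeff (k - 1)) * x ^ (k - 1) := by
  rw [homEval, sum_eq_single_of_mem (k - 1) (mem_range.2 (by omega))]
  · simp
  · intro s hs hne
    rw [zero_pow (by have := mem_range.1 hs; omega), mul_zero]

theorem eval_homEval (k : ℕ) (f : R[X]) (x y : S[X]) (z : S) :
    (homEval k f x y).eval z = homEval k f (x.eval z) (y.eval z) := by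
  simp [homEval, eval_finsetSum, Polynomial.algebraMap_apply]

theorem natDegree_homEval_le (k : ℕ) (f : R[X]) {x y : S[X]}
    (hx : x.natDegree ≤ 1) (hy : y.natDegree ≤ 1) : (homEval k f x y).natDegree ≤ k - 1 := by
  refine natDegree_sum_le_of_forall_le _ _ fun s hs ↦ ?_
  have hsk : s + (k - 1 - s) = k - 1 := by have := mem_range.1 hs; omega
  rw [Polynomial.algebraMap_apply]
  calc _ ≤ 0 + s * 1 + (k - 1 - s) * 1 :=
        natDegree_mul_le_of_le (natDegree_mul_le_of_le (natDegree_C _).le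
          (natDegree_pow_le_of_le s hx)) (natDegree_pow_le_of_le _ hy)
    _ = k - 1 := by omega

end HomEval

theorem IsPrimitiveRoot.pow_sub_one_of_orderOf {M : Type*} [CommMonoid M] {ω : M} {q : ℕ}
    (hq : 1 < q) (hω : orderOf ω = q ^ 2 - 1) : IsPrimitiveRoot (ω ^ (q - 1)) (q + 1) := by
  have hsq : q ^ 2 - 1 = (q - 1) * (q + 1) := by
    obtain ⟨m, rfl⟩ : ∃ m, q = m + 1 := ⟨q - 1, by omega⟩
    rw [Nat.add_sub_cancel, show (m + 1) ^ 2 = m * (m + 1 + 1) + 1 by ring, Nat.add_sub_cancel]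
  have hord := orderOf_pow_of_dvd (x := ω) (n := q - 1) (by omega)
    (by rw [hω, hsq]; exact dvd_mul_right _ _)
  rw [hω, hsq, Nat.mul_div_cancel_left _ (by omega)] at hord
  exact hord ▸ IsPrimitiveRoot.orderOf _

section RootsOfUnity

variable {K : Type*} [Field K] {ζ : K} {n : ℕ}

theorem IsPrimitiveRoot.zpow_ne_zpow (hζ : IsPrimitiveRoot ζ n) {s t : ℤ} (hst : s ≠ t)
    (hlt : |s - t| < n) : ζ ^ s ≠ ζ ^ t := by
  have hζ0 : ζ ≠ 0 := hζ.ne_zero (by rintro rfl; exact (abs_nonneg _).not_gt hlt)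
  intro h
  have hone : ζ ^ (s - t) = 1 := by rw [zpow_sub₀ hζ0, h, div_self (zpow_ne_zero _ hζ0)]
  exact hst (sub_eq_zero.1 (Int.eq_zero_of_abs_lt_dvd ((hζ.zpow_eq_one_iff_dvd _).1 hone) hlt))

theorem IsPrimitiveRoot.sum_pow_mul_eval_eq_zero (hζ : IsPrimitiveRoot ζ n) {G : K[X]} {e : ℕ}
    (he : 0 < e) (hG : e + G.natDegree < n) :
    ∑ i ∈ range n, (ζ ^ i) ^ e * G.eval (ζ ^ i) = 0 := by
  simp_rw [eval_eq_sum_range, mul_sum]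
  rw [sum_comm]
  refine sum_eq_zero fun s hs ↦ ?_
  have hne : ζ ^ (e + s) ≠ 1 :=
    hζ.pow_ne_one_of_pos_of_lt (by omega) (by have := mem_range.1 hs; omega)
  have hgeom : ∑ i ∈ range n, (ζ ^ (e + s)) ^ i = 0 := by
    refine eq_zero_of_ne_zero_of_mul_right_eq_zero (sub_ne_zero.2 hne) ?_
    rw [geom_sum_mul, ← pow_mul, mul_comm, pow_mul, hζ.pow_eq_one, one_pow, sub_self]
  calc ∑ i ∈ range n, (ζ ^ i) ^ e * (G.coeff s * (ζ ^ i) ^ s)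
      = G.coeff s * ∑ i ∈ range n, (ζ ^ (e + s)) ^ i := by
        rw [mul_sum]
        exact sum_congr rfl fun i _ ↦ by ring
    _ = 0 := by rw [hgeom, mul_zero]

end RootsOfUnity

section Shifts

variable {R : Type*} [CommRing R] {n k : ℕ}

def shiftedCoeffs (g : R[X]) (n t : ℕ) : Fin n → R :=
  fun i ↦ if t ≤ (i : ℕ) then g.coeff (i - t) else 0

variable (R) in
/-- For `g ∣ X ^ n - 1` of degree `n - k` this is the cyclic code `⟨g⟩`. -/
def shiftSpan (n k : ℕ) (g : R[X]) : Submodule R (Fin n → R) :=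
  Submodule.span R {v | ∃ t : Fin k, v = shiftedCoeffs g n t}

theorem toFn_X_pow_mul (g : R[X]) (t : ℕ) : toFn n (X ^ t * g) = shiftedCoeffs g n t :=
  funext fun _ ↦ coeff_X_pow_mul' g t _

theorem toFn_mul_mem_shiftSpan (g : R[X]) {u : R[X]} (hu : u.natDegree < k) :
    toFn n (g * u) ∈ shiftSpan R n k g := by
  rw [u.as_sum_range_C_mul_X_pow' hu, mul_sum, map_sum]
  refine Submodule.sum_mem _ fun t ht ↦ ?_
  have hterm : g * (C (u.coeff t) * X ^ t) = u.coeff t • (X ^ t * g) := by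
    rw [smul_eq_C_mul]
    ring
  rw [hterm, map_smul, toFn_X_pow_mul]
  exact Submodule.smul_mem _ _ (Submodule.subset_span ⟨⟨t, mem_range.1 ht⟩, rfl⟩)

theorem toFn_mem_shiftSpan_of_dvd {g W : R[X]} (hg : g.Monic) (hW : g ∣ W)
    (hdeg : W.natDegree < g.natDegree + k) (hk : 0 < k) :
    toFn n W ∈ shiftSpan R n k g := by
  obtain ⟨u, rfl⟩ := hW
  refine toFn_mul_mem_shiftSpan g ?_
  rcases eq_or_ne u 0 with rfl | hu
  · simpa
  · rw [hg.natDegree_mul' hu] at hdeg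
    omega

theorem finrank_shiftSpan_le {F : Type*} [Field F] (g : F[X]) :
    Module.finrank F (shiftSpan F n k g) ≤ k := by
  have hset : {v | ∃ t : Fin k, v = shiftedCoeffs g n t} =
      Set.range fun t : Fin k ↦ shiftedCoeffs g n t :=
    Set.ext fun _ ↦ exists_congr fun _ ↦ eq_comm
  rw [shiftSpan, hset]
  exact (finrank_range_le_card _).trans_eq (Fintype.card_fin k)

end Shifts

section GRS

variable {F : Type*} [Field F] {q : ℕ} (a : Fin q → F) (θ : Fin (q + 1) → F) (k : ℕ)

/-- The last coordinate carries the value of `f` at infinity, its coefficient of `X ^ (k - 1)`. -/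
noncomputable def grsEncode : F[X] →ₗ[F] Fin (q + 1) → F where
  toFun f i := θ i * (Fin.snoc (fun j : Fin q => f.eval (a j)) (f.coeff (k - 1)) :
    Fin (q + 1) → F) i
  map_add' f g := by
    ext i
    induction i using Fin.lastCases <;> simp [mul_add]
  map_smul' c f := by
    ext i
    induction i using Fin.lastCases <;> simp [mul_left_comm]

@[simp]
theorem grsEncode_castSucc (f : F[X]) (j : Fin q) :
    grsEncode a θ k f j.castSucc = θ j.castSucc * f.eval (a j) := by
  simp [grsEncode]

@[simp]
theorem grsEncode_last (f : F[X]) :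
    grsEncode a θ k f (Fin.last q) = θ (Fin.last q) * f.coeff (k - 1) := by
  simp [grsEncode]

variable {a θ k}

theorem hammingNorm_grsEncode [DecidableEq F] (hθ : ∀ i, θ i ≠ 0) (f : F[X]) :
    hammingNorm (grsEncode a θ k f) =
      #{j | f.eval (a j) ≠ 0} + if f.coeff (k - 1) = 0 then 0 else 1 := by
  simp [hammingNorm, card_filter, Fin.sum_univ_castSucc, hθ]

theorem card_filter_eval_eq_zero_le [DecidableEq F] (ha : Function.Injective a) {f : F[X]}
    (hf : f ≠ 0) : #{j | f.eval (a j) = 0} ≤ f.natDegree := by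
  calc #{j | f.eval (a j) = 0} = #(({j | f.eval (a j) = 0} : Finset (Fin q)).image a) :=
        (card_image_of_injective _ ha).symm
    _ ≤ f.natDegree := card_le_degree_of_subset_roots fun x hx ↦ by
        obtain ⟨j, hj, rfl⟩ := mem_image.1 (Finset.mem_val.mp hx)
        exact (mem_roots hf).2 (mem_filter.1 hj).2

theorem le_hammingNorm_grsEncode [DecidableEq F] (ha : Function.Injective a)
    (hθ : ∀ i, θ i ≠ 0) {f : F[X]} (hf : f ≠ 0) (hfk : f.natDegree < k) :
    q + 2 - k ≤ hammingNorm (grsEncode a θ k f) := by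
  have hzeros := card_filter_eval_eq_zero_le ha hf
  have hsplit := card_filter_add_card_filter_not (s := univ) fun j : Fin q ↦ f.eval (a j) ≠ 0
  simp only [not_not, card_univ, Fintype.card_fin] at hsplit
  rw [hammingNorm_grsEncode hθ]
  split_ifs with htop
  · have : f.natDegree ≠ k - 1 := fun h ↦ hf (leadingCoeff_eq_zero.1 (by rwa [leadingCoeff, h]))
    omega
  · omega

theorem le_hammingNorm_of_mem_map_grsEncode [DecidableEq F] (ha : Function.Injective a)
    (hθ : ∀ i, θ i ≠ 0) (hk : 1 ≤ k) {w : Fin (q + 1) → F}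
    (hw : w ∈ (degreeLT F k).map (grsEncode a θ k)) (hw0 : w ≠ 0) :
    q + 2 - k ≤ hammingNorm w := by
  obtain ⟨f, hf, rfl⟩ := hw
  exact le_hammingNorm_grsEncode ha hθ (by rintro rfl; simp at hw0)
    (natDegree_lt_of_mem_degreeLT hk hf)

theorem finrank_map_grsEncode [DecidableEq F] (ha : Function.Injective a) (hθ : ∀ i, θ i ≠ 0)
    (hkq : k ≤ q) : Module.finrank F ((degreeLT F k).map (grsEncode a θ k)) = k := by
  have hinj : Function.Injective ((grsEncode a θ k).comp (degreeLT F k).subtype) := by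
    refine (injective_iff_map_eq_zero _).2 fun f hf ↦ Submodule.coe_eq_zero.1 ?_
    by_contra hf0
    have hweight := le_hammingNorm_grsEncode ha hθ hf0
      ((natDegree_lt_iff_degree_lt hf0).2 (mem_degreeLT.1 f.2))
    rw [show grsEncode a θ k f = 0 from hf, hammingNorm_zero] at hweight
    omega
  rw [← Submodule.range_subtype (degreeLT F k), ← LinearMap.range_comp,
    LinearMap.finrank_range_of_inj hinj, (degreeLTEquiv F k).finrank_eq, Module.finrank_fin_fun]

theorem isGRSCode_map_grsEncode (ha : Function.Bijective a) (hθ : ∀ i, θ i ≠ 0) (hk : 1 ≤ k) :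
    IsGRSCode q k F F ((degreeLT F k).map (grsEncode a θ k) : Set (Fin (q + 1) → F)) := by
  refine ⟨a, θ, ha, hθ, ?_⟩
  obtain ⟨m, rfl⟩ : ∃ m, k = m + 1 := ⟨k - 1, by omega⟩
  ext w
  simp [degreeLT_succ_eq_degreeLE, mem_degreeLE, eq_comm, grsEncode]

theorem algebraMap_grsEncode_eq_mul_homEval {K : Type*} [CommRing K] [Algebra F K] (hk : 1 ≤ k)
    {x y c : Fin (q + 1) → K}
    (hx : ∀ j : Fin q, x j.castSucc = algebraMap F K (a j) * y j.castSucc)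
    (hy : y (Fin.last q) = 0)
    (hθ : ∀ j : Fin q, algebraMap F K (θ j.castSucc) = c j.castSucc * y j.castSucc ^ (k - 1))
    (hθlast : algebraMap F K (θ (Fin.last q)) = c (Fin.last q) * x (Fin.last q) ^ (k - 1))
    {f : F[X]} (hf : f.natDegree < k) (i : Fin (q + 1)) :
    algebraMap F K (grsEncode a θ k f i) = c i * homEval k f (x i) (y i) := by
  induction i using Fin.lastCases with
  | last =>
    rw [grsEncode_last, map_mul, hθlast, hy, homEval_zero_right hk]
    ring
  | cast j =>
    rw [grsEncode_castSucc, map_mul, hθ, hx, homEval_algebraMap_mul hf]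
    ring

end GRS

section CyclicCode

variable {F K : Type*} [Field F] [DecidableEq F] [Field K] [Algebra F K] {q k r : ℕ} {α : K}
  {w : Fin (q + 1) → F} {G : K[X]}

theorem eval_map_ofFn_eq_zero (hqkr : q = 2 * r + k) (hα : IsPrimitiveRoot α (q + 1))
    (hG : G.natDegree < k)
    (hw : ∀ i : Fin (q + 1),
      algebraMap F K (w i) = (α ^ (i : ℕ)) ^ (r + 1) * G.eval (α ^ (i : ℕ)))
    {j : ℤ} (hj : j ∈ Icc (-(r : ℤ)) r) :
    ((ofFn (q + 1) w).map (algebraMap F K)).eval (α ^ j) = 0 := by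
  rw [mem_Icc] at hj
  obtain ⟨e, he⟩ : ∃ e : ℕ, (e : ℤ) = r + 1 + j := ⟨(r + 1 + j).toNat, by omega⟩
  have hterm (i : ℕ) : (α ^ i) ^ (r + 1) * G.eval (α ^ i) * (α ^ j) ^ i =
      (α ^ i) ^ e * G.eval (α ^ i) := by
    have hαi : α ^ i ≠ 0 := pow_ne_zero _ (hα.ne_zero (by omega))
    have hcomm : (α ^ j) ^ i = (α ^ i) ^ j := by
      rw [← zpow_natCast, ← zpow_mul, ← zpow_natCast α i, ← zpow_mul, mul_comm]
    have hexp : (α ^ i) ^ (r + 1) * (α ^ i) ^ j = (α ^ i) ^ e := by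
      rw [← zpow_natCast (α ^ i) e, he, zpow_add₀ hαi]
      norm_cast
    rw [hcomm, mul_right_comm, hexp]
  simp only [ofFn_eq_sum_monomial, Polynomial.map_sum, map_monomial, eval_finsetSum,
    eval_monomial, hw, hterm]
  rw [Fin.sum_univ_eq_sum_range (fun i ↦ (α ^ i) ^ e * G.eval (α ^ i))]
  exact hα.sum_pow_mul_eval_eq_zero (by omega) (by omega)

theorem mem_shiftSpan_of_algebraMap_eq (hqkr : q = 2 * r + k) (hα : IsPrimitiveRoot α (q + 1))
    {g : F[X]} (hg : g.Monic)
    (hgmap : g.map (algebraMap F K) = ∏ i ∈ Icc (-(r : ℤ)) r, (X - C (α ^ i)))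
    (hG : G.natDegree < k)
    (hw : ∀ i : Fin (q + 1),
      algebraMap F K (w i) = (α ^ (i : ℕ)) ^ (r + 1) * G.eval (α ^ (i : ℕ))) :
    w ∈ shiftSpan F (q + 1) k g := by
  have hdvd : g ∣ ofFn (q + 1) w := by
    rw [← map_dvd_map' (algebraMap F K), hgmap]
    refine prod_dvd_of_coprime (fun s hs t ht hst ↦ ?_) fun j hj ↦
      dvd_iff_isRoot.2 (eval_map_ofFn_eq_zero hqkr hα hG hw hj)
    simp only [coe_Icc, Set.mem_Icc] at hs ht
    exact isCoprime_X_sub_C_of_isUnit_sub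
      (sub_ne_zero.2 (hα.zpow_ne_zpow hst (abs_sub_lt_iff.2 ⟨by omega, by omega⟩))).isUnit
  have hdeg : g.natDegree = 2 * r + 1 := by
    rw [← natDegree_map_eq_of_injective (algebraMap F K).injective, hgmap,
      natDegree_prod_of_monic _ _ fun _ _ ↦ monic_X_sub_C _]
    simp only [natDegree_X_sub_C, sum_const, Int.card_Icc, smul_eq_mul, mul_one]
    omega
  have hWdeg := ofFn_natDegree_lt (Nat.le_add_left 1 q) w
  rw [← toFn_comp_ofFn_eq_id (q + 1) w]
  exact toFn_mem_shiftSpan_of_dvd hg hdvd (by omega) (by omega)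

end CyclicCode

section GrasslRoetteler

variable {F K : Type*} [Field F] [DecidableEq F] [Field K] [Algebra F K] {q k r : ℕ}
  {α ν b : K}

theorem grsEncode_mem_shiftSpan (hqkr : q = 2 * r + k) (hk : 1 ≤ k)
    (hα : IsPrimitiveRoot α (q + 1)) {a : Fin q → F} {θ : Fin (q + 1) → F}
    (ha : ∀ j : Fin q,
      b * α ^ (j : ℕ) - b ^ q * α ^ q = algebraMap F K (a j) * (α ^ (j : ℕ) - α ^ q))
    (hθ : ∀ j : Fin q, algebraMap F K (θ j.castSucc) =
      (α ^ (j : ℕ)) ^ (r + 1) * (ν * (α ^ (j : ℕ) - α ^ q)) ^ (k - 1))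
    (hθlast : algebraMap F K (θ (Fin.last q)) =
      (α ^ q) ^ (r + 1) * (ν * (b * α ^ q - b ^ q * α ^ q)) ^ (k - 1))
    {g : F[X]} (hg : g.Monic)
    (hgmap : g.map (algebraMap F K) = ∏ i ∈ Icc (-(r : ℤ)) r, (X - C (α ^ i)))
    {f : F[X]} (hf : f.natDegree < k) :
    grsEncode a θ k f ∈ shiftSpan F (q + 1) k g := by
  refine mem_shiftSpan_of_algebraMap_eq hqkr hα hg hgmap (G := homEval k f
    (C ν * (C b * X - C (b ^ q * α ^ q))) (C ν * (X - C (α ^ q))))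
    ((natDegree_homEval_le k f (by compute_degree) (by compute_degree)).trans_lt (by omega))
    fun i ↦ ?_
  rw [eval_homEval]
  simp only [eval_mul, eval_C, eval_sub, eval_X]
  refine algebraMap_grsEncode_eq_mul_homEval hk
    (x := fun i ↦ ν * (b * α ^ (i : ℕ) - b ^ q * α ^ q))
    (y := fun i ↦ ν * (α ^ (i : ℕ) - α ^ q)) (c := fun i ↦ (α ^ (i : ℕ)) ^ (r + 1))
    (fun j ↦ ?_) (by simp) (by simpa using hθ) (by simpa using hθlast) hf i
  simp only [Fin.val_castSucc, ha]
  ring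

variable [Fintype F]

theorem exists_map_grsEncode_le_shiftSpan (hF : Fintype.card F = q) (hqkr : q = 2 * r + k)
    (hk : Odd k) (hα : IsPrimitiveRoot α (q + 1)) (hν : ν ^ q = ν * α ^ q) (hν0 : ν ≠ 0)
    (hb : b ^ q ≠ b) (hbb : (b ^ q) ^ q = b) {g : F[X]} (hg : g.Monic)
    (hgmap : g.map (algebraMap F K) = ∏ i ∈ Icc (-(r : ℤ)) r, (X - C (α ^ i))) :
    ∃ (a : Fin q → F) (θ : Fin (q + 1) → F), Function.Bijective a ∧ (∀ i, θ i ≠ 0) ∧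
      (degreeLT F k).map (grsEncode a θ k) ≤ shiftSpan F (q + 1) k g := by
  have hk1 : 1 ≤ k := hk.pos
  have hunit (i : ℕ) : (α ^ i) ^ q * α ^ i = 1 := by
    rw [← pow_succ, ← pow_mul, mul_comm, pow_mul, hα.pow_eq_one, one_pow]
  have hconj {u v z : K} (hu : u ^ q = v) (hv : v ^ q = u) (hz : z ^ q * z = 1) :
      (ν * (u * z - v * α ^ q)) ^ q * z = -(ν * (u * z - v * α ^ q)) := by
    rw [mul_pow, hν]
    linear_combination ν * pow_card_mul_sub_mul hF hu hv hz (hunit q)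
  have hzβ (j : Fin q) : α ^ (j : ℕ) ≠ α ^ q :=
    fun h ↦ j.2.ne (hα.pow_inj (j.2.trans q.lt_succ_self) q.lt_succ_self h)
  obtain ⟨a, ha, hab⟩ := exists_bijective_algebraMap_mul_sub hF (z := fun j : Fin q ↦ α ^ (j : ℕ))
    hb hbb (hunit q) (fun j ↦ hunit j)
    (fun j j' h ↦ Fin.ext (hα.pow_inj (j.2.trans q.lt_succ_self) (j'.2.trans q.lt_succ_self) h))
    hzβ
  -- homogeneous coordinates of the Möbius image of `α ^ i`
  set W : Fin (q + 1) → K :=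
    Fin.snoc (fun j : Fin q ↦ ν * (α ^ (j : ℕ) - α ^ q)) (ν * (b * α ^ q - b ^ q * α ^ q))
  have hWconj : ∀ i, W i ^ q * α ^ (i : ℕ) = -W i := Fin.lastCases
    (by simpa [W] using hconj rfl hbb (hunit q))
    fun j ↦ by simpa [W] using hconj (one_pow q) (one_pow q) (hunit j)
  have hlast0 : b * α ^ q - b ^ q * α ^ q ≠ 0 := by
    rw [← sub_mul]
    exact mul_ne_zero (sub_ne_zero.2 hb.symm) (pow_ne_zero q (hα.ne_zero (by omega)))
  have hW0 : ∀ i, W i ≠ 0 := Fin.lastCases (by simpa [W] using mul_ne_zero hν0 hlast0)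
    fun j ↦ by simpa [W] using mul_ne_zero hν0 (sub_ne_zero.2 (hzβ j))
  obtain ⟨θ, hθ0, hθ⟩ := exists_algebraMap_eq_pow_mul_pow hF (r := r + 1) (m := k - 1)
    (z := fun i : Fin (q + 1) ↦ α ^ (i : ℕ)) (by omega) (Nat.Odd.sub_odd hk odd_one)
    (fun i ↦ hunit i) hWconj hW0
  refine ⟨a, θ, ha, hθ0, ?_⟩
  rintro _ ⟨f, hf, rfl⟩
  exact grsEncode_mem_shiftSpan hqkr hk1 hα hab (fun j ↦ by simpa [W] using hθ j.castSucc)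
    (by simpa [W] using hθ (Fin.last q)) hg hgmap (natDegree_lt_of_mem_degreeLT hk1 hf)

end GrasslRoetteler

theorem grassl_roetteler_cyclic_odd_odd_is_GRS_general
    (q k r : ℕ) (F K : Type*) [Field F] [Fintype F] [Field K] [Fintype K]
    [DecidableEq F] [Algebra F K]
    (hF : Fintype.card F = q) (hK : Fintype.card K = q ^ 2)
    (hkodd : Odd k) (hk1 : 1 ≤ k)
    (hkr : (k : ℤ) = q - 2 * r)
    (ω : K) (hω : orderOf ω = q ^ 2 - 1)
    (α : K) (hα : α = ω ^ (q - 1))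
    (g₁ : Polynomial K)
    (hg₁ : g₁ = ∏ i ∈ Finset.Icc (-(r : ℤ)) (r : ℤ), (X - C (α ^ i)))
    (c : ℕ → F) (hc : ∀ j, algebraMap F K (c j) = g₁.coeff j)
    (Code : Submodule F (Fin (q + 1) → F))
    (hCode : Code = Submodule.span F
      { v | ∃ t : Fin k, v = fun i : Fin (q + 1) =>
          if (t : ℕ) ≤ (i : ℕ) then c ((i : ℕ) - (t : ℕ)) else 0 }) :
    IsGRSCode q k F F (Code : Set (Fin (q + 1) → F)) ∧
    Module.finrank F Code = k ∧
    (∀ w ∈ Code, w ≠ 0 → q + 2 - k ≤ hammingNorm w) := by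
  have hqkr : q = 2 * r + k := by omega
  have hq : 1 < q := hF ▸ Fintype.one_lt_card
  have hαprim : IsPrimitiveRoot α (q + 1) := hα ▸ IsPrimitiveRoot.pow_sub_one_of_orderOf hq hω
  have hω0 : ω ≠ 0 := ne_zero_pow (by omega) (hα ▸ hαprim.ne_zero (by omega))
  have hν : (ω ^ q) ^ q = ω ^ q * α ^ q := by
    rw [hα, ← pow_mul, ← pow_mul, ← pow_add, Nat.sub_one_mul,
      Nat.add_sub_cancel' (Nat.le_mul_self q)]
  obtain ⟨b, hb⟩ := exists_pow_card_ne (F := F) (K := K) (by rw [hF, hK]; nlinarith)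
  rw [hF] at hb
  have hbb : (b ^ q) ^ q = b := by rw [← pow_mul, ← sq, ← hK, FiniteField.pow_card]
  obtain ⟨g₀, hg₀, rfl⟩ := exists_map_eq_of_coeff_eq (algebraMap F K).injective hc
  have hg₀monic : g₀.Monic := monic_of_injective (algebraMap F K).injective
    (hg₀ ▸ hg₁ ▸ monic_prod_of_monic _ _ fun _ _ ↦ monic_X_sub_C _)
  obtain ⟨a, θ, ha, hθ, hle⟩ := exists_map_grsEncode_le_shiftSpan hF hqkr hkodd hαprim hν
    (pow_ne_zero q hω0) hb hbb hg₀monic (hg₀.trans hg₁)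
  have hEq : (degreeLT F k).map (grsEncode a θ k) = Code := by
    refine Submodule.eq_of_le_of_finrank_le (hCode ▸ hle) ?_
    rw [finrank_map_grsEncode ha.1 hθ (by omega), hCode]
    exact finrank_shiftSpan_le g₀
  subst hEq
  exact ⟨isGRSCode_map_grsEncode ha hθ hk1, finrank_map_grsEncode ha.1 hθ (by omega),
    fun w hw hw0 ↦ le_hammingNorm_of_mem_map_grsEncode ha.1 hθ hk1 hw hw0⟩

/-- Let `q` be an odd prime power, `ω` a primitive element of `𝔽_{q²}`,
`α = ω^{q−1}` a primitive `(q+1)`-st root of unity, and let `k` be odd with `1 ≤ k ≤ q`;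
write `k = q − 2r`.  Let `g₁(X) = ∏_{i=−r}^{r} (X − α^i)`, a polynomial with coefficients
`c j` in `𝔽_q` dividing `X^{q+1} − 1`.  Then the `k`-dimensional cyclic code `⟨g₁⟩` of length
`q+1` over `𝔽_q` (the span of the `k` cyclic shifts of `(c₀,…,c_{q+1−k},0,…,0)`) is a
generalised Reed–Solomon code, and is a `[q+1,k,q+2−k]_q` MDS code. -/
theorem grassl_roetteler_cyclic_odd_odd_is_GRS
    (q k r : ℕ) (F K : Type*) [Field F] [Fintype F] [Field K] [Fintype K]
    [DecidableEq F] [Algebra F K]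
    (hF : Fintype.card F = q) (hK : Fintype.card K = q ^ 2)
    (hqodd : Odd q) (hkodd : Odd k) (hk1 : 1 ≤ k) (hkq : k ≤ q)
    (hkr : (k : ℤ) = q - 2 * r)
    (ω : K) (hω : orderOf ω = q ^ 2 - 1)
    (α : K) (hα : α = ω ^ (q - 1))
    (g₁ : Polynomial K)
    (hg₁ : g₁ = ∏ i ∈ Finset.Icc (-(r : ℤ)) (r : ℤ), (X - C (α ^ i)))
    (c : ℕ → F) (hc : ∀ j, algebraMap F K (c j) = g₁.coeff j)
    (Code : Submodule F (Fin (q + 1) → F))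
    (hCode : Code = Submodule.span F
      { v | ∃ t : Fin k, v = fun i : Fin (q + 1) =>
          if (t : ℕ) ≤ (i : ℕ) then c ((i : ℕ) - (t : ℕ)) else 0 }) :
    IsGRSCode q k F F (Code : Set (Fin (q + 1) → F)) ∧
    Module.finrank F Code = k ∧
    (∀ w ∈ Code, w ≠ 0 → q + 2 - k ≤ hammingNorm w) :=
  grassl_roetteler_cyclic_odd_odd_is_GRS_general q k r F K hF hK hkodd hk1 hkr ω hω α hα g₁ hg₁ c hc
    Code hCode
end

section
/- Let q be a prime power, let F_q ⊆ F_{q²}, let e ∈ F_{q²} with e ∉ F_q, let m ≥ 1 be an integer, and let c_0, …, c_{m−1} ∈ F_{q²}. Then every coefficient of the bivariate polynomial P(X, Y) = Σ_{i=0}^{m−1} [ c_i (X + eY)^{m−1−i}(X + e^q Y)^{m+i} + c_i^q (X + eY)^{m+i}(X + e^q Y)^{m−1−i} ] ∈ F_{q²}[X, Y] lies in the subfield F_q; that is, P is a homogeneous polynomial of degree 2m−1 with coefficients in F_q. -/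
/-!
The `q`-power Frobenius of `K = 𝔽_{q²}` is an involution whose fixed points are exactly `𝔽_q`.
Applied coefficientwise it swaps the linear forms `X + eY` and `X + e^q Y` and sends `cᵢ` to
`cᵢ^q`, so it exchanges the two halves of each summand and fixes `P`; hence every coefficient of
`P` lies in `𝔽_q`. Each summand is a product of `2m − 1` linear forms, so `P` is homogeneous.
-/

open MvPolynomial

theorem FiniteField.mem_range_algebraMap_of_pow_card_eq {F K : Type*} [Field F] [Fintype F]
    [Field K] [Finite K] [Algebra F K] {x : K} (hx : x ^ Fintype.card F = x) :
    x ∈ Set.range (algebraMap F K) := by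
  rw [IsGalois.mem_range_algebraMap_iff_fixed]
  intro f
  obtain ⟨n, rfl⟩ := (bijective_frobeniusAlgEquivOfAlgebraic_pow F K).2 f
  rw [AlgEquiv.coe_pow]
  exact Function.IsFixedPt.iterate hx n

theorem FiniteField.frobeniusAlgHom_involutive {F K : Type*} [Field F] [Fintype F]
    [Field K] [Fintype K] [Algebra F K] (hK : Fintype.card K = Fintype.card F ^ 2) :
    Function.Involutive (frobeniusAlgHom F K) := fun x => by
  simp only [frobeniusAlgHom_apply]
  rw [← pow_mul, ← sq, ← hK, FiniteField.pow_card]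

theorem MvPolynomial.coeff_mem_range_algebraMap_of_map_frobenius_eq {τ F K : Type*} [Field F]
    [Fintype F] [Field K] [Finite K] [Algebra F K] {P : MvPolynomial τ K}
    (hP : map (FiniteField.frobeniusAlgHom F K : K →+* K) P = P) (d : τ →₀ ℕ) :
    coeff d P ∈ Set.range (algebraMap F K) :=
  FiniteField.mem_range_algebraMap_of_pow_card_eq <| by
    simpa [coeff_map] using congrArg (coeff d) hP

theorem MvPolynomial.map_add_map_of_involutive {τ R : Type*} [CommSemiring R] {σ : R →+* R}
    (hσ : Function.Involutive σ) (Q : MvPolynomial τ R) :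
    map σ (Q + map σ Q) = Q + map σ Q := by
  rw [map_add, map_map, add_comm]
  congr
  convert map_id Q
  exact RingHom.ext hσ

theorem MvPolynomial.isHomogeneous_X_add_C_mul_X {τ R : Type*} [CommSemiring R] (i j : τ)
    (a : R) :
    (X i + C a * X j : MvPolynomial τ R).IsHomogeneous 1 :=
  (isHomogeneous_X _ _).add ((isHomogeneous_C _ _).mul (isHomogeneous_X _ _))

theorem MvPolynomial.isHomogeneous_C_mul_pow_mul_pow {τ R : Type*} [CommSemiring R] (i j : τ)
    (c a b : R) (k l : ℕ) :
    (C c * (X i + C a * X j) ^ k * (X i + C b * X j) ^ l : MvPolynomial τ R).IsHomogeneous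
      (k + l) := by
  simpa using ((isHomogeneous_C _ c).mul ((isHomogeneous_X_add_C_mul_X i j a).pow k)).mul
    ((isHomogeneous_X_add_C_mul_X i j b).pow l)

theorem MvPolynomial.map_C_mul_pow_mul_pow {τ R S : Type*} [CommSemiring R] [CommSemiring S]
    (f : R →+* S) (i j : τ) (c a b : R) (k l : ℕ) :
    map f (C c * (X i + C a * X j) ^ k * (X i + C b * X j) ^ l) =
      C (f c) * (X i + C (f a) * X j) ^ k * (X i + C (f b) * X j) ^ l := by
  simp

theorem coeffs_in_subfield_of_symmetrized_odd_general
    (q m : ℕ) (F K : Type*) [Field F] [Fintype F] [Field K] [Fintype K] [Algebra F K]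
    (hF : Fintype.card F = q) (hK : Fintype.card K = q ^ 2)
    (e : K) (c : ℕ → K)
    (P : MvPolynomial (Fin 2) K)
    (hP : P = ∑ i ∈ Finset.range m,
      (C (c i) * (X 0 + C e * X 1) ^ (m - 1 - i) * (X 0 + C (e ^ q) * X 1) ^ (m + i)
       + C (c i ^ q) * (X 0 + C e * X 1) ^ (m + i) * (X 0 + C (e ^ q) * X 1) ^ (m - 1 - i))) :
    (∀ d : Fin 2 →₀ ℕ, MvPolynomial.coeff d P ∈ Set.range (algebraMap F K)) ∧
    P.IsHomogeneous (2 * m - 1) := by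
  subst hF
  set σ : K →+* K := (FiniteField.frobeniusAlgHom F K : K →+* K)
  have hσ : Function.Involutive σ := FiniteField.frobeniusAlgHom_involutive hK
  set Q : MvPolynomial (Fin 2) K := ∑ i ∈ Finset.range m,
    C (c i) * (X 0 + C e * X 1) ^ (m - 1 - i) * (X 0 + C (e ^ Fintype.card F) * X 1) ^ (m + i)
  have hPQ : P = Q + map σ Q := by
    have hσe : σ (e ^ Fintype.card F) = e := hσ e
    rw [hP, map_sum, ← Finset.sum_add_distrib]
    refine Finset.sum_congr rfl fun i _ => ?_
    rw [map_C_mul_pow_mul_pow, hσe]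
    exact congrArg _ (mul_right_comm _ _ _)
  refine ⟨coeff_mem_range_algebraMap_of_map_frobenius_eq (hPQ ▸ map_add_map_of_involutive hσ Q),
    ?_⟩
  rw [hP]
  refine IsHomogeneous.sum _ _ _ fun i hi => ?_
  have hdeg : m - 1 - i + (m + i) = 2 * m - 1 := by grind
  have hdeg' : m + i + (m - 1 - i) = 2 * m - 1 := by grind
  exact (hdeg ▸ isHomogeneous_C_mul_pow_mul_pow _ _ _ _ _ _ _).add
    (hdeg' ▸ isHomogeneous_C_mul_pow_mul_pow _ _ _ _ _ _ _)

/-- Let `q` be a prime power, `F = 𝔽_q ⊆ K = 𝔽_{q²}`, let `e ∈ K` with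
`e ∉ F`, let `m ≥ 1` be an integer, and let `c₀, …, c_{m−1} ∈ K`.  Then every coefficient of
the bivariate polynomial
`P(X, Y) = Σ_{i=0}^{m−1} [ cᵢ (X + eY)^{m−1−i}(X + e^q Y)^{m+i}
                           + cᵢ^q (X + eY)^{m+i}(X + e^q Y)^{m−1−i} ]`
lies in the subfield `F`; that is, `P` is a homogeneous polynomial of degree `2m−1` with
coefficients in `F`. -/
theorem coeffs_in_subfield_of_symmetrized_odd
    (q m : ℕ) (F K : Type*) [Field F] [Fintype F] [Field K] [Fintype K] [Algebra F K]
    (hF : Fintype.card F = q) (hK : Fintype.card K = q ^ 2)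
    (e : K) (he : e ∉ Set.range (algebraMap F K))
    (hm : 1 ≤ m) (c : ℕ → K)
    (P : MvPolynomial (Fin 2) K)
    (hP : P = ∑ i ∈ Finset.range m,
      (C (c i) * (X 0 + C e * X 1) ^ (m - 1 - i) * (X 0 + C (e ^ q) * X 1) ^ (m + i)
       + C (c i ^ q) * (X 0 + C e * X 1) ^ (m + i) * (X 0 + C (e ^ q) * X 1) ^ (m - 1 - i))) :
    (∀ d : Fin 2 →₀ ℕ, MvPolynomial.coeff d P ∈ Set.range (algebraMap F K)) ∧
    P.IsHomogeneous (2 * m - 1) :=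
  coeffs_in_subfield_of_symmetrized_odd_general q m F K hF hK e c P hP
end
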